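/- Let n ≥ 3, p ∈ (0,1), {I_{i,j}} i.i.d. Bernoulli(p) symmetric edge indicators, and for t ∈ [0,1] define V_n(t) = (1/(2n^2)) Σ_{1≤i,j,k≤⌊nt⌋ distinct} I_{i,j}I_{j,k} and T_n(t) = ((⌊nt⌋-2)/n^2) Σ_{1≤i<j≤⌊nt⌋} I_{i,j}. Let (I,J) be uniform over unordered pairs, I'_{I,J} an independent Bernoulli(p), and V'_n(t) = V_n(t) - (1/n^2) Σ_{k≠I,J} (I_{I,J} - I'_{I,J})(I_{J,k} + I_{I,k}) 1_{[I/n,1]∩[J/n,1]∩[k/n,1]}(t). Then for every t ∈ [0,1], E[V_n(t) - V'_n(t) | G] = (2/C(n,2)) (V_n(t) - E[V_n(t)]) - (2p/C(n,2)) (T_n(t) - E[T_n(t)]), where G = σ({I_{i,j}}). -/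

import Mathlib

open MeasureTheory ProbabilityTheory
open scoped ENNReal NNReal

/-!
For a pair `q` of vertices among the first `⌊nt⌋` (and `B_q = 0` otherwise), write `B_q` for
the number of edges among these vertices that share exactly one endpoint with `q`. Resampling
the edge `(I, J)` changes `V_n` by `n⁻² (I_{IJ} - I'_{IJ}) B_{IJ}`, and `B` is `G`-measurable
while `(I, J)` and `I'` are independent of `G`; conditioning thus replaces `1{(I,J) = q}` by
`1 / C(n,2)` and `I'` by `p`: `E[V_n - V'_n | G] = C(n,2)⁻¹ n⁻² Σ_q (I_q - p) B_q`.
Counting two-stars through an edge gives `Σ_q I_q B_q = 2n² V_n` and `Σ_q B_q = 2n² T_n`, so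
this is `(2 / C(n,2)) (V_n - p T_n)`. Finally `I_q` is independent of every edge counted in
`B_q`, hence `E[I_q B_q] = p E[B_q]` and `E[V_n] = p E[T_n]`.
-/

/-- The rescaled edge-count process
`T_n(t) = ((⌊nt⌋-2)/n²) Σ_{1≤i<j≤⌊nt⌋} I_{i,j}`. -/
noncomputable def Tproc {Ω : Type*} (n : ℕ) (E : Fin n → Fin n → Ω → ℝ)
    (ω : Ω) (t : ℝ) : ℝ :=
  (((⌊(n : ℝ) * t⌋ : ℝ) - 2) / (n : ℝ) ^ 2) *
    ∑ i : Fin n, ∑ j : Fin n,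
      if (i : ℕ) < (j : ℕ) ∧ ((j : ℕ) + 1 : ℤ) ≤ ⌊(n : ℝ) * t⌋ then E i j ω else 0

/-- The rescaled two-star process
`V_n(t) = (1/(2n²)) Σ_{i,j,k ≤ ⌊nt⌋ distinct} I_{i,j} I_{j,k}`. -/
noncomputable def Vproc {Ω : Type*} (n : ℕ) (E : Fin n → Fin n → Ω → ℝ)
    (ω : Ω) (t : ℝ) : ℝ :=
  (1 / (2 * (n : ℝ) ^ 2)) *
    ∑ i : Fin n, ∑ j : Fin n, ∑ k : Fin n,
      if i ≠ j ∧ j ≠ k ∧ i ≠ k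
          ∧ ((i : ℕ) + 1 : ℤ) ≤ ⌊(n : ℝ) * t⌋
          ∧ ((j : ℕ) + 1 : ℤ) ≤ ⌊(n : ℝ) * t⌋
          ∧ ((k : ℕ) + 1 : ℤ) ≤ ⌊(n : ℝ) * t⌋
        then E i j ω * E j k ω else 0

/-- The resampled version `V'_n` of `V_n`, where the edge at the random pair
`(I,J) = pr ω` is replaced by the independent Bernoulli variable `E' ω`. -/
noncomputable def Vproc' {Ω : Type*} (n : ℕ) (E : Fin n → Fin n → Ω → ℝ)
    (pr : Ω → {q : Fin n × Fin n // q.1 < q.2}) (E' : Ω → ℝ) (ω : Ω) (t : ℝ) : ℝ :=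
  Vproc n E ω t
    - (1 / (n : ℝ) ^ 2) *
        ∑ k : Fin n,
          if k ≠ (pr ω).1.1 ∧ k ≠ (pr ω).1.2 then
            (E (pr ω).1.1 (pr ω).1.2 ω - E' ω) *
              (E (pr ω).1.2 k ω + E (pr ω).1.1 k ω) *
              (if max (max ((((pr ω).1.1 : ℕ) + 1 : ℝ) / (n : ℝ))
                    ((((pr ω).1.2 : ℕ) + 1 : ℝ) / (n : ℝ)))
                  (((k : ℕ) + 1 : ℝ) / (n : ℝ)) ≤ t then 1 else 0)
          else 0

open Finset

abbrev Edge (α : Type*) [LT α] : Type _ := {q : α × α // q.1 < q.2}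

section Combinatorics

variable {α M : Type*} [Fintype α] [LinearOrder α] [AddCommMonoid M]

theorem sum_edge (f : α → α → M) :
    ∑ q : Edge α, f q.1.1 q.1.2 = ∑ i, ∑ j, if i < j then f i j else 0 := by
  rw [← Fintype.sum_prod_type' (fun i j => if i < j then f i j else 0), ← Finset.sum_filter]
  refine (Finset.sum_subtype _ (fun q => ?_) fun q : α × α => f q.1 q.2).symm
  simp

theorem sum_sum_ite_lt_add_swap (f : α → α → M) (hf : ∀ i, f i i = 0) :
    ∑ i, ∑ j, (if i < j then f i j + f j i else 0) = ∑ i, ∑ j, f i j := by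
  have hswap : ∑ i, ∑ j, (if i < j then f j i else 0) = ∑ i, ∑ j, if j < i then f i j else 0 :=
    Finset.sum_comm
  simp only [ite_add_zero, Finset.sum_add_distrib, hswap]
  rw [← Finset.sum_add_distrib]
  refine Finset.sum_congr rfl fun i _ => ?_
  rw [← Finset.sum_add_distrib]
  refine Finset.sum_congr rfl fun j _ => ?_
  rcases lt_trichotomy i j with h | rfl | h
  · simp [h, h.not_gt]
  · simp [hf]
  · simp [h, h.not_gt]

theorem sum_edge_eq_sum_sum_of_add_swap {f : α → α → M} (g : α → α → M) (hf : ∀ i, f i i = 0)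
    (hg : ∀ i j, i < j → g i j = f i j + f j i) :
    ∑ q : Edge α, g q.1.1 q.1.2 = ∑ i, ∑ j, f i j := by
  rw [sum_edge, ← sum_sum_ite_lt_add_swap f hf]
  exact Finset.sum_congr rfl fun i _ => Finset.sum_congr rfl fun j _ =>
    if_ctx_congr Iff.rfl (hg i j) fun _ => rfl

def adjacentEdgeCount (e : α → α → ℝ) (P : α → Prop) [DecidablePred P] (i j : α) : ℝ :=
  ∑ k, if k ≠ i ∧ k ≠ j ∧ P i ∧ P j ∧ P k then e j k + e i k else 0

variable (P : α → Prop) [DecidablePred P] {e : α → α → ℝ}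

theorem abs_adjacentEdgeCount_le (he : ∀ i j, |e i j| ≤ 1) (i j : α) :
    |adjacentEdgeCount e P i j| ≤ 2 * Fintype.card α := by
  calc |adjacentEdgeCount e P i j|
      ≤ ∑ k, |if k ≠ i ∧ k ≠ j ∧ P i ∧ P j ∧ P k then e j k + e i k else 0| :=
        Finset.abs_sum_le_sum_abs _ _
    _ ≤ ∑ _k : α, (2 : ℝ) := Finset.sum_le_sum fun k _ => by
        split_ifs
        · exact (abs_add_le _ _).trans (by linarith [he j k, he i k])
        · simp
    _ = 2 * Fintype.card α := by simp [mul_comm]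

theorem measurable_adjacentEdgeCount (i j : α) :
    Measurable fun x : α × α → ℝ => adjacentEdgeCount (fun i j => x (i, j)) P i j :=
  Finset.measurable_sum _ fun k _ => by split_ifs <;> fun_prop

theorem sum_edge_mul_adjacentEdgeCount (hsym : ∀ i j, e j i = e i j) :
    ∑ q : Edge α, e q.1.1 q.1.2 * adjacentEdgeCount e P q.1.1 q.1.2
      = ∑ i, ∑ j, ∑ k,
          if i ≠ j ∧ j ≠ k ∧ i ≠ k ∧ P i ∧ P j ∧ P k then e i j * e j k else 0 := by
  refine sum_edge_eq_sum_sum_of_add_swap (fun i j => e i j * adjacentEdgeCount e P i j) (by simp)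
    fun i j hij => ?_
  rw [adjacentEdgeCount, Finset.mul_sum, ← Finset.sum_add_distrib]
  refine Finset.sum_congr rfl fun k _ => ?_
  rw [hsym i j]
  have := hij.ne
  split_ifs <;> first | ring1 | (exfalso; grind)

omit [LinearOrder α] in
theorem card_filter_and_ne_and_ne [DecidableEq α] {j k : α} (hj : P j) (hk : P k) (hjk : j ≠ k) :
    (#{i | P i ∧ i ≠ j ∧ i ≠ k} : ℝ) = #{i | P i} - 2 := by
  have h : ({i | P i} : Finset α)
      = insert j (insert k ({i | P i ∧ i ≠ j ∧ i ≠ k} : Finset α)) := by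
    ext i; by_cases i = j <;> by_cases i = k <;> simp_all
  rw [h, card_insert_of_notMem (by simp [hjk]), card_insert_of_notMem (by simp)]
  push_cast; ring

theorem sum_edge_adjacentEdgeCount (hsym : ∀ i j, e j i = e i j) :
    ∑ q : Edge α, adjacentEdgeCount e P q.1.1 q.1.2
      = 2 * ((#{i | P i} : ℝ) - 2) * ∑ i, ∑ j, if i < j ∧ P i ∧ P j then e i j else 0 := by
  have hcount : ∀ j k, ∑ i, (if k ≠ i ∧ k ≠ j ∧ i ≠ j ∧ P i ∧ P j ∧ P k then e j k else 0)
      = if j ≠ k ∧ P j ∧ P k then ((#{i | P i} : ℝ) - 2) * e j k else 0 := by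
    intro j k
    split_ifs with h
    · rw [← card_filter_and_ne_and_ne P h.2.1 h.2.2 h.1, ← nsmul_eq_mul, ← Finset.sum_const,
        Finset.sum_filter]
      exact Finset.sum_congr rfl fun i _ => if_congr (by grind) rfl rfl
    · exact Finset.sum_eq_zero fun i _ => if_neg (by grind)
  calc ∑ q : Edge α, adjacentEdgeCount e P q.1.1 q.1.2
      = ∑ i, ∑ j, ∑ k, if k ≠ i ∧ k ≠ j ∧ i ≠ j ∧ P i ∧ P j ∧ P k then e j k else 0 := by
        refine sum_edge_eq_sum_sum_of_add_swap _ (by simp) fun i j hij => ?_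
        rw [adjacentEdgeCount, ← Finset.sum_add_distrib]
        refine Finset.sum_congr rfl fun k _ => ?_
        have := hij.ne
        split_ifs <;> first | ring1 | (exfalso; grind)
    _ = ∑ j, ∑ k, if j ≠ k ∧ P j ∧ P k then ((#{i | P i} : ℝ) - 2) * e j k else 0 := by
        rw [Finset.sum_comm]
        exact Finset.sum_congr rfl fun j _ => Finset.sum_comm.trans
          (Finset.sum_congr rfl fun k _ => hcount j k)
    _ = ∑ j, ∑ k,
          if j < k then 2 * ((#{i | P i} : ℝ) - 2) * (if P j ∧ P k then e j k else 0) else 0 := by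
        rw [← sum_sum_ite_lt_add_swap _ (by simp)]
        refine Finset.sum_congr rfl fun j _ => Finset.sum_congr rfl fun k _ => ?_
        refine if_ctx_congr Iff.rfl (fun hjk => ?_) fun _ => rfl
        rw [hsym j k]
        have := hjk.ne
        split_ifs <;> first | ring1 | (exfalso; grind)
    _ = 2 * ((#{i | P i} : ℝ) - 2) * ∑ j, ∑ k, if j < k ∧ P j ∧ P k then e j k else 0 := by
        simp only [Finset.mul_sum, ← ite_and, mul_ite, mul_zero]

end Combinatorics

section Probability

variable {Ω β : Type*} {mΩ : MeasurableSpace Ω} {μ : Measure Ω}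

theorem integral_eq_measureReal_of_zero_or_one {f : Ω → ℝ} (hf : Measurable f)
    (h01 : ∀ ω, f ω = 0 ∨ f ω = 1) : ∫ ω, f ω ∂μ = μ.real {ω | f ω = 1} := by
  have hf_eq : f = {ω | f ω = 1}.indicator 1 := by
    ext ω
    rcases h01 ω with h | h <;> simp [h]
  conv_lhs => rw [hf_eq]
  exact integral_indicator_one (hf (measurableSet_singleton 1))

theorem integral_indicator_preimage_mul_eq_of_indepFun {ι : Type*} [MeasurableSpace ι]
    [MeasurableSingletonClass ι] {Y : Ω → ι} (hY : Measurable Y) {Z : Ω → ℝ}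
    (hZ : AEStronglyMeasurable Z μ) (hYZ : IndepFun Y Z μ) (i : ι) :
    ∫ ω, (Y ⁻¹' {i}).indicator 1 ω * Z ω ∂μ = μ.real (Y ⁻¹' {i}) * ∫ ω, Z ω ∂μ := by
  have hind : IndepFun ((Y ⁻¹' {i}).indicator (1 : Ω → ℝ)) Z μ :=
    hYZ.comp (measurable_one.indicator (measurableSet_singleton i)) measurable_id
  rw [hind.integral_fun_mul_eq_mul_integral
    (measurable_one.indicator (hY (measurableSet_singleton i))).aestronglyMeasurable hZ,
    integral_indicator_one (hY (measurableSet_singleton i))]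

theorem condExp_mul_eq_of_indepFun [IsFiniteMeasure μ] [MeasurableSpace β] {X : Ω → β}
    (hX : Measurable X) {f g : Ω → ℝ}
    (hf : StronglyMeasurable[MeasurableSpace.comap X inferInstance] f)
    {C : ℝ} (hfC : ∀ ω, |f ω| ≤ C) (hg : Measurable g) (hgi : Integrable g μ)
    (hind : IndepFun g X μ) :
    μ[fun ω => f ω * g ω | MeasurableSpace.comap X inferInstance]
      =ᵐ[μ] fun ω => f ω * ∫ x, g x ∂μ := by
  have hg_indep : μ[g | MeasurableSpace.comap X inferInstance] =ᵐ[μ] fun _ => ∫ x, g x ∂μ :=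
    condExp_indep_eq hg.comap_le hX.comap_le
      (comap_measurable g).stronglyMeasurable ((IndepFun_iff_Indep _ _ _).mp hind)
  filter_upwards [condExp_stronglyMeasurable_mul_of_bound hX.comap_le hf hgi C
    (.of_forall hfC), hg_indep] with ω h1 h2
  rw [← Pi.mul_def (f := f) (g := g), h1, Pi.mul_apply, h2]

theorem integrable_sum_mul {ι : Type*} (s : Finset ι) {f g : ι → Ω → ℝ}
    (hf : ∀ i, AEStronglyMeasurable (f i) μ) {C : ℝ} (hfC : ∀ i ω, |f i ω| ≤ C)
    (hgi : ∀ i, Integrable (g i) μ) :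
    Integrable (fun ω => ∑ i ∈ s, f i ω * g i ω) μ :=
  integrable_finsetSum s fun i _ => (hgi i).bdd_mul (hf i) (.of_forall (hfC i))

theorem condExp_sum_mul_eq_of_indepFun [IsFiniteMeasure μ] [MeasurableSpace β] {ι : Type*}
    (s : Finset ι) {X : Ω → β} (hX : Measurable X) {f g : ι → Ω → ℝ}
    (hf : ∀ i, StronglyMeasurable[MeasurableSpace.comap X inferInstance] (f i)) {C : ℝ}
    (hfC : ∀ i ω, |f i ω| ≤ C) (hg : ∀ i, Measurable (g i)) (hgi : ∀ i, Integrable (g i) μ)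
    (hind : ∀ i, IndepFun (g i) X μ) :
    μ[fun ω => ∑ i ∈ s, f i ω * g i ω | MeasurableSpace.comap X inferInstance]
      =ᵐ[μ] fun ω => ∑ i ∈ s, f i ω * ∫ x, g i x ∂μ := by
  have hint : ∀ i ∈ s, Integrable (fun ω => f i ω * g i ω) μ := fun i _ => by
    simpa using integrable_sum_mul {i} (fun i => ((hf i).mono hX.comap_le).aestronglyMeasurable)
      hfC hgi
  have hsum : (fun ω => ∑ i ∈ s, f i ω * g i ω) = ∑ i ∈ s, fun ω => f i ω * g i ω := by
    ext ω; simp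
  rw [hsum]
  filter_upwards [condExp_finsetSum hint _, (Filter.eventually_all_finset s).mpr fun i _ =>
    condExp_mul_eq_of_indepFun hX (hf i) (hfC i) (hg i) (hgi i) (hind i)] with ω h1 h2
  rw [h1, Finset.sum_apply]
  exact Finset.sum_congr rfl h2

end Probability

section TwoStarProcess

variable {Ω : Type*} {n : ℕ}

-- Vertex `i : Fin n` is the paper's vertex `i + 1`, present by time `t` iff `i + 1 ≤ ⌊n t⌋`.
abbrev Arrived (n : ℕ) (t : ℝ) (i : Fin n) : Prop := ((i : ℕ) + 1 : ℤ) ≤ ⌊(n : ℝ) * t⌋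

noncomputable def adjacentEdgeProc (n : ℕ) (E : Fin n → Fin n → Ω → ℝ) (t : ℝ)
    (q : Edge (Fin n)) (ω : Ω) : ℝ :=
  adjacentEdgeCount (fun i j => E i j ω) (Arrived n t) q.1.1 q.1.2

theorem abs_adjacentEdgeProc_le {E : Fin n → Fin n → Ω → ℝ} (hE1 : ∀ i j ω, |E i j ω| ≤ 1)
    (t : ℝ) (q : Edge (Fin n)) (ω : Ω) : |adjacentEdgeProc n E t q ω| ≤ 2 * n := by
  simpa [adjacentEdgeProc] using abs_adjacentEdgeCount_le _ (fun i j => hE1 i j ω) q.1.1 q.1.2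

theorem abs_mul_adjacentEdgeProc_le {E : Fin n → Fin n → Ω → ℝ} (hE1 : ∀ i j ω, |E i j ω| ≤ 1)
    (t : ℝ) (q : Edge (Fin n)) (ω : Ω) :
    |E q.1.1 q.1.2 ω * adjacentEdgeProc n E t q ω| ≤ 2 * n := by
  simpa [abs_mul] using
    mul_le_mul (hE1 _ _ ω) (abs_adjacentEdgeProc_le hE1 t q ω) (abs_nonneg _) zero_le_one

theorem card_arrived {t : ℝ} (ht : t ∈ Set.Icc 0 1) :
    (#{i | Arrived n t i} : ℝ) = ⌊(n : ℝ) * t⌋ := by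
  have hM0 : 0 ≤ ⌊(n : ℝ) * t⌋ := Int.floor_nonneg.mpr (mul_nonneg n.cast_nonneg ht.1)
  have hMn : ⌊(n : ℝ) * t⌋ ≤ n :=
    Int.floor_le_iff.mpr (by push_cast; nlinarith [ht.2, (n.cast_nonneg : (0 : ℝ) ≤ n)])
  have hfilter : (univ.filter (Arrived n t))
      = univ.filter fun i : Fin n => (i : ℕ) < ⌊(n : ℝ) * t⌋.toNat := by
    ext i; simp only [Finset.mem_filter, Finset.mem_univ, true_and]; omega
  rw [hfilter, Fin.card_filter_val_lt, min_eq_right (by omega)]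
  exact_mod_cast Int.toNat_of_nonneg hM0

theorem div_le_iff_arrived {t : ℝ} (i : Fin n) : ((i : ℕ) + 1 : ℝ) / n ≤ t ↔ Arrived n t i := by
  have hn : (0 : ℝ) < n := by exact_mod_cast i.pos
  rw [div_le_iff₀ hn, Arrived, Int.le_floor, mul_comm]
  push_cast
  rfl

variable {E : Fin n → Fin n → Ω → ℝ} {t : ℝ}

theorem Vproc_eq_sum_edge (hsym : ∀ i j, E j i = E i j) (ω : Ω) :
    Vproc n E ω t
      = 1 / (2 * (n : ℝ) ^ 2) *
          ∑ q : Edge (Fin n), E q.1.1 q.1.2 ω * adjacentEdgeProc n E t q ω := by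
  simp only [Vproc, adjacentEdgeProc]
  rw [sum_edge_mul_adjacentEdgeCount _ fun i j => congrFun (hsym i j) ω]

theorem Tproc_eq_sum_edge (hsym : ∀ i j, E j i = E i j) (ht : t ∈ Set.Icc 0 1) (ω : Ω) :
    Tproc n E ω t = 1 / (2 * (n : ℝ) ^ 2) * ∑ q : Edge (Fin n), adjacentEdgeProc n E t q ω := by
  simp only [Tproc, adjacentEdgeProc]
  rw [sum_edge_adjacentEdgeCount _ fun i j => congrFun (hsym i j) ω, card_arrived ht]
  have hcond : ∀ i j : Fin n, ((i : ℕ) < (j : ℕ) ∧ ((j : ℕ) + 1 : ℤ) ≤ ⌊(n : ℝ) * t⌋)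
      ↔ i < j ∧ Arrived n t i ∧ Arrived n t j := by
    intro i j; rw [Fin.lt_def]; omega
  simp only [hcond]
  ring

theorem Vproc_sub_Vproc' (pr : Ω → Edge (Fin n)) (E' : Ω → ℝ) (ω : Ω) :
    Vproc n E ω t - Vproc' n E pr E' ω t
      = 1 / (n : ℝ) ^ 2 *
          ((E (pr ω).1.1 (pr ω).1.2 ω - E' ω) * adjacentEdgeProc n E t (pr ω) ω) := by
  rw [Vproc', sub_sub_cancel, adjacentEdgeProc, adjacentEdgeCount]
  congr 1
  rw [Finset.mul_sum]
  refine Finset.sum_congr rfl fun k _ => ?_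
  simp only [max_le_iff, div_le_iff_arrived]
  split_ifs <;> first | ring1 | (exfalso; grind)

theorem Vproc_sub_Vproc'_eq_sum (pr : Ω → Edge (Fin n)) (E' : Ω → ℝ) (ω : Ω) :
    Vproc n E ω t - Vproc' n E pr E' ω t
      = 1 / (n : ℝ) ^ 2 *
          (∑ q, E q.1.1 q.1.2 ω * adjacentEdgeProc n E t q ω * (pr ⁻¹' {q}).indicator 1 ω
            - ∑ q, adjacentEdgeProc n E t q ω * ((pr ⁻¹' {q}).indicator 1 ω * E' ω)) := by
  classical
  simp only [Vproc_sub_Vproc', Set.indicator_apply, Set.mem_preimage, Set.mem_singleton_iff,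
    Pi.one_apply, mul_ite, mul_one, mul_zero, ite_mul, zero_mul, Finset.sum_ite_eq,
    Finset.mem_univ, if_true]
  ring

end TwoStarProcess

section RandomGraph

variable {Ω : Type*} {mΩ : MeasurableSpace Ω} {μ : Measure Ω}

theorem indepFun_edge_of_ne {α : Type*} [LinearOrder α] {E : α → α → Ω → ℝ}
    (hsym : ∀ i j, E j i = E i j) (hind : iIndepFun (fun q : Edge α => E q.1.1 q.1.2) μ)
    {i j a k : α} (hij : i < j) (hak : a ≠ k) (hki : k ≠ i) (hkj : k ≠ j) :
    IndepFun (E i j) (E a k) μ := by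
  rcases hak.lt_or_gt with h | h
  · exact hind.indepFun (i := ⟨(i, j), hij⟩) (j := ⟨(a, k), h⟩) (by simp [hkj.symm])
  · rw [hsym k a]
    exact hind.indepFun (i := ⟨(i, j), hij⟩) (j := ⟨(k, a), h⟩) (by simp [hki.symm])

variable {n : ℕ} {E : Fin n → Fin n → Ω → ℝ} {t : ℝ}

theorem measurable_adjacentEdgeProc (hEm : ∀ i j, Measurable (E i j)) (q : Edge (Fin n)) :
    Measurable (adjacentEdgeProc n E t q) :=
  (measurable_adjacentEdgeCount _ _ _).comp (measurable_pi_lambda _ fun q => hEm q.1 q.2)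

theorem stronglyMeasurable_comap_adjacentEdgeProc (q : Edge (Fin n)) :
    StronglyMeasurable[MeasurableSpace.comap (fun ω (q : Fin n × Fin n) => E q.1 q.2 ω)
      inferInstance] (adjacentEdgeProc n E t q) :=
  ((measurable_adjacentEdgeCount _ _ _).comp (comap_measurable _)).stronglyMeasurable

theorem stronglyMeasurable_comap_mul_adjacentEdgeProc (q : Edge (Fin n)) :
    StronglyMeasurable[MeasurableSpace.comap (fun ω (q : Fin n × Fin n) => E q.1 q.2 ω)
      inferInstance] (fun ω => E q.1.1 q.1.2 ω * adjacentEdgeProc n E t q ω) :=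
  (((measurable_pi_apply _).mul (measurable_adjacentEdgeCount _ _ _)).comp
    (comap_measurable _)).stronglyMeasurable

theorem integrable_adjacentEdgeProc [IsFiniteMeasure μ] (hEm : ∀ i j, Measurable (E i j))
    (hE1 : ∀ i j ω, |E i j ω| ≤ 1) (q : Edge (Fin n)) :
    Integrable (adjacentEdgeProc n E t q) μ :=
  .of_bound (measurable_adjacentEdgeProc hEm q).aestronglyMeasurable (2 * n)
    (.of_forall (abs_adjacentEdgeProc_le hE1 t q))

theorem integrable_mul_adjacentEdgeProc [IsFiniteMeasure μ] (hEm : ∀ i j, Measurable (E i j))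
    (hE1 : ∀ i j ω, |E i j ω| ≤ 1) (q : Edge (Fin n)) :
    Integrable (fun ω => E q.1.1 q.1.2 ω * adjacentEdgeProc n E t q ω) μ :=
  (integrable_adjacentEdgeProc hEm hE1 q).bdd_mul (hEm _ _).aestronglyMeasurable
    (.of_forall fun ω => hE1 _ _ ω)

theorem integral_mul_adjacentEdgeProc [IsFiniteMeasure μ] (hEm : ∀ i j, Measurable (E i j))
    (hE1 : ∀ i j ω, |E i j ω| ≤ 1) (hsym : ∀ i j, E j i = E i j)
    (hind : iIndepFun (fun q : Edge (Fin n) => E q.1.1 q.1.2) μ) (q : Edge (Fin n)) :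
    ∫ ω, E q.1.1 q.1.2 ω * adjacentEdgeProc n E t q ω ∂μ
      = (∫ ω, E q.1.1 q.1.2 ω ∂μ) * ∫ ω, adjacentEdgeProc n E t q ω ∂μ := by
  obtain ⟨⟨i, j⟩, hij⟩ := q
  have hEi : ∀ a b, Integrable (E a b) μ := fun a b =>
    .of_bound (hEm a b).aestronglyMeasurable 1 (.of_forall (hE1 a b))
  have hterm : ∀ k, Integrable (fun ω => if k ≠ i ∧ k ≠ j ∧ Arrived n t i ∧ Arrived n t j
      ∧ Arrived n t k then E j k ω + E i k ω else 0) μ := fun k => by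
    split_ifs
    exacts [(hEi j k).add (hEi i k), integrable_zero _ _ _]
  simp only [adjacentEdgeProc, adjacentEdgeCount, Finset.mul_sum]
  rw [integral_finsetSum _ fun k _ => (hterm k).bdd_mul (hEm i j).aestronglyMeasurable
      (.of_forall (hE1 i j)), integral_finsetSum _ fun k _ => hterm k, Finset.mul_sum]
  refine Finset.sum_congr rfl fun k _ => ?_
  split_ifs with hk
  · obtain ⟨hki, hkj, -⟩ := hk
    simp only [mul_add]
    rw [integral_add ((hEi j k).bdd_mul (hEm i j).aestronglyMeasurable (.of_forall (hE1 i j)))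
        ((hEi i k).bdd_mul (hEm i j).aestronglyMeasurable (.of_forall (hE1 i j))),
      integral_add (hEi j k) (hEi i k),
      (indepFun_edge_of_ne hsym hind hij hkj.symm hki hkj).integral_fun_mul_eq_mul_integral
        (hEm i j).aestronglyMeasurable (hEm j k).aestronglyMeasurable,
      (indepFun_edge_of_ne hsym hind hij hki.symm hki hkj).integral_fun_mul_eq_mul_integral
        (hEm i j).aestronglyMeasurable (hEm i k).aestronglyMeasurable, mul_add]
  · simp

theorem integral_Vproc_eq_mul_integral_Tproc [IsFiniteMeasure μ] (hEm : ∀ i j, Measurable (E i j))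
    (hE1 : ∀ i j ω, |E i j ω| ≤ 1) (hsym : ∀ i j, E j i = E i j)
    (hind : iIndepFun (fun q : Edge (Fin n) => E q.1.1 q.1.2) μ) (ht : t ∈ Set.Icc 0 1) {p : ℝ}
    (hEp : ∀ q : Edge (Fin n), ∫ ω, E q.1.1 q.1.2 ω ∂μ = p) :
    ∫ ω, Vproc n E ω t ∂μ = p * ∫ ω, Tproc n E ω t ∂μ := by
  simp only [Vproc_eq_sum_edge hsym, Tproc_eq_sum_edge hsym ht]
  rw [integral_const_mul, integral_const_mul,
    integral_finsetSum _ fun q _ => integrable_mul_adjacentEdgeProc hEm hE1 q,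
    integral_finsetSum _ fun q _ => integrable_adjacentEdgeProc hEm hE1 q]
  simp only [integral_mul_adjacentEdgeProc hEm hE1 hsym hind, hEp, ← Finset.mul_sum]
  ring

theorem condExp_Vproc_sub_Vproc' [IsProbabilityMeasure μ] (hEm : ∀ i j, Measurable (E i j))
    (hE1 : ∀ i j ω, |E i j ω| ≤ 1) {pr : Ω → Edge (Fin n)} (hprm : Measurable pr) {c : ℝ}
    (hc : ∀ q, μ.real (pr ⁻¹' {q}) = c) {E' : Ω → ℝ} (hE'm : Measurable E')
    (hE'i : Integrable E' μ)
    (hindPair : IndepFun (fun ω => (pr ω, E' ω)) (fun ω (q : Fin n × Fin n) => E q.1 q.2 ω) μ)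
    (hindPrE' : IndepFun pr E' μ) :
    μ[fun ω => Vproc n E ω t - Vproc' n E pr E' ω t
        | MeasurableSpace.comap (fun ω (q : Fin n × Fin n) => E q.1 q.2 ω) inferInstance]
      =ᵐ[μ] fun ω => c / (n : ℝ) ^ 2 *
        ∑ q : Edge (Fin n), (E q.1.1 q.1.2 ω - ∫ x, E' x ∂μ) * adjacentEdgeProc n E t q ω := by
  have hX : Measurable fun ω (q : Fin n × Fin n) => E q.1 q.2 ω :=
    measurable_pi_lambda _ fun q => hEm q.1 q.2
  have hB := stronglyMeasurable_comap_adjacentEdgeProc (E := E) (t := t)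
  have hEB := stronglyMeasurable_comap_mul_adjacentEdgeProc (E := E) (t := t)
  have hχm : ∀ q, Measurable ((pr ⁻¹' {q}).indicator (1 : Ω → ℝ)) := fun q =>
    measurable_one.indicator (hprm (measurableSet_singleton q))
  have hχi : ∀ q, Integrable ((pr ⁻¹' {q}).indicator (1 : Ω → ℝ)) μ := fun q =>
    (integrable_const 1).indicator (hprm (measurableSet_singleton q))
  have hχE'i : ∀ q, Integrable (fun ω => (pr ⁻¹' {q}).indicator 1 ω * E' ω) μ := fun q =>
    hE'i.bdd_mul (c := 1) (hχm q).aestronglyMeasurable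
      (.of_forall fun ω => (norm_indicator_le_norm_self _ _).trans (by simp))
  -- Each summand is a `G`-measurable factor times a factor independent of `G`.
  have hdecomp : (fun ω => Vproc n E ω t - Vproc' n E pr E' ω t)
      = (1 / (n : ℝ) ^ 2) •
        ((fun ω => ∑ q, E q.1.1 q.1.2 ω * adjacentEdgeProc n E t q ω * (pr ⁻¹' {q}).indicator 1 ω)
          - fun ω => ∑ q, adjacentEdgeProc n E t q ω * ((pr ⁻¹' {q}).indicator 1 ω * E' ω)) :=
    funext (Vproc_sub_Vproc'_eq_sum pr E')
  rw [hdecomp]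
  refine (condExp_smul _ _ _).trans ?_
  filter_upwards [condExp_sub
      (integrable_sum_mul _ (fun q => ((hEB q).mono hX.comap_le).aestronglyMeasurable)
        (abs_mul_adjacentEdgeProc_le hE1 t) hχi)
      (integrable_sum_mul _ (fun q => ((hB q).mono hX.comap_le).aestronglyMeasurable)
        (abs_adjacentEdgeProc_le hE1 t) hχE'i) _,
    condExp_sum_mul_eq_of_indepFun _ hX hEB (abs_mul_adjacentEdgeProc_le hE1 t) hχm hχi
      fun q => hindPair.comp
        ((measurable_one.indicator (measurableSet_singleton q)).comp measurable_fst) measurable_id,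
    condExp_sum_mul_eq_of_indepFun _ hX hB (abs_adjacentEdgeProc_le hE1 t)
      (g := fun q ω => (pr ⁻¹' {q}).indicator 1 ω * E' ω)
      (fun q => (hχm q).mul hE'm) hχE'i fun q => hindPair.comp
        (((measurable_one.indicator (measurableSet_singleton q)).comp measurable_fst).mul
          measurable_snd) measurable_id] with ω h₁ h₂ h₃
  rw [Pi.smul_apply, h₁, Pi.sub_apply, h₂, h₃]
  simp only [integral_indicator_one (hprm (measurableSet_singleton _)), hc,
    integral_indicator_preimage_mul_eq_of_indepFun hprm hE'm.aestronglyMeasurable hindPrE',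
    smul_eq_mul, Finset.mul_sum, ← Finset.sum_sub_distrib]
  refine Finset.sum_congr rfl fun q _ => ?_
  ring

end RandomGraph

theorem stmt10_general {Ω : Type*} [MeasurableSpace Ω] (μ : Measure Ω) [IsProbabilityMeasure μ]
    (n : ℕ) (p : ℝ) (hp : p ∈ Set.Ioo (0 : ℝ) 1)
    (E : Fin n → Fin n → Ω → ℝ) (hEm : ∀ i j, Measurable (E i j))
    (hsym : ∀ i j, E j i = E i j)
    (h01 : ∀ i j ω, E i j ω = 0 ∨ E i j ω = 1)
    (hber : ∀ i j : Fin n, i < j → μ {ω | E i j ω = 1} = ENNReal.ofReal p)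
    (hind : iIndepFun
      (fun q : {q : Fin n × Fin n // q.1 < q.2} => E q.1.1 q.1.2) μ)
    (pr : Ω → {q : Fin n × Fin n // q.1 < q.2}) (hprm : Measurable pr)
    (hpru : ∀ q, μ (pr ⁻¹' {q}) = (((n * (n - 1) / 2 : ℕ)) : ℝ≥0∞)⁻¹)
    (E' : Ω → ℝ) (hE'm : Measurable E')
    (hE'01 : ∀ ω, E' ω = 0 ∨ E' ω = 1) (hE'p : μ {ω | E' ω = 1} = ENNReal.ofReal p)
    (hindPair : IndepFun (fun ω => (pr ω, E' ω))
      (fun ω (q : Fin n × Fin n) => E q.1 q.2 ω) μ)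
    (hindPrE' : IndepFun pr E' μ)
    (t : ℝ) (ht : t ∈ Set.Icc (0 : ℝ) 1) :
    μ[fun ω => Vproc n E ω t - Vproc' n E pr E' ω t
        | MeasurableSpace.comap (fun ω (q : Fin n × Fin n) => E q.1 q.2 ω) inferInstance]
      =ᵐ[μ] fun ω =>
        (2 / ((n : ℝ) * ((n : ℝ) - 1) / 2)) *
            (Vproc n E ω t - ∫ ω', Vproc n E ω' t ∂μ)
          - (2 * p / ((n : ℝ) * ((n : ℝ) - 1) / 2)) *
            (Tproc n E ω t - ∫ ω', Tproc n E ω' t ∂μ) := by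
  have hE1 : ∀ i j ω, |E i j ω| ≤ 1 := fun i j ω => by rcases h01 i j ω with h | h <;> simp [h]
  have hbernoulli : ∀ f : Ω → ℝ, Measurable f → (∀ ω, f ω = 0 ∨ f ω = 1) →
      μ {ω | f ω = 1} = ENNReal.ofReal p → ∫ ω, f ω ∂μ = p := fun f hf hf01 hfp => by
    rw [integral_eq_measureReal_of_zero_or_one hf hf01, measureReal_def, hfp,
      ENNReal.toReal_ofReal hp.1.le]
  have hEp : ∀ q : Edge (Fin n), ∫ ω, E q.1.1 q.1.2 ω ∂μ = p := fun q =>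
    hbernoulli _ (hEm _ _) (h01 _ _) (hber _ _ q.2)
  have hE'i : Integrable E' μ := .of_bound hE'm.aestronglyMeasurable 1
    (.of_forall fun ω => by rcases hE'01 ω with h | h <;> simp [h])
  have hc : ∀ q, μ.real (pr ⁻¹' {q}) = ((n : ℝ) * ((n : ℝ) - 1) / 2)⁻¹ := fun q => by
    rw [measureReal_def, hpru, ENNReal.toReal_inv, ENNReal.toReal_natCast, ← Nat.choose_two_right,
      Nat.cast_choose_two]
  filter_upwards [condExp_Vproc_sub_Vproc' hEm hE1 hprm hc hE'm hE'i hindPair hindPrE'] with ω hω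
  rw [hω, hbernoulli E' hE'm hE'01 hE'p,
    integral_Vproc_eq_mul_integral_Tproc hEm hE1 hsym hind ht hEp, Vproc_eq_sum_edge hsym,
    Tproc_eq_sum_edge hsym ht]
  simp only [sub_mul, Finset.sum_sub_distrib, ← Finset.mul_sum]
  ring

/-- Conditional linearity for the two-star exchangeable pair:
`E[V_n(t) - V'_n(t) | G] = (2/C(n,2))(V_n(t) - E V_n(t)) - (2p/C(n,2))(T_n(t) - E T_n(t))`. -/
theorem stmt10 {Ω : Type*} [MeasurableSpace Ω] (μ : Measure Ω) [IsProbabilityMeasure μ]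
    (n : ℕ) (hn : 3 ≤ n) (p : ℝ) (hp : p ∈ Set.Ioo (0 : ℝ) 1)
    (E : Fin n → Fin n → Ω → ℝ) (hEm : ∀ i j, Measurable (E i j))
    (hsym : ∀ i j, E j i = E i j) (hdiag : ∀ i ω, E i i ω = 0)
    (h01 : ∀ i j ω, E i j ω = 0 ∨ E i j ω = 1)
    (hber : ∀ i j : Fin n, i < j → μ {ω | E i j ω = 1} = ENNReal.ofReal p)
    (hind : iIndepFun
      (fun q : {q : Fin n × Fin n // q.1 < q.2} => E q.1.1 q.1.2) μ)
    (pr : Ω → {q : Fin n × Fin n // q.1 < q.2}) (hprm : Measurable pr)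
    (hpru : ∀ q, μ (pr ⁻¹' {q}) = (((n * (n - 1) / 2 : ℕ)) : ℝ≥0∞)⁻¹)
    (E' : Ω → ℝ) (hE'm : Measurable E')
    (hE'01 : ∀ ω, E' ω = 0 ∨ E' ω = 1) (hE'p : μ {ω | E' ω = 1} = ENNReal.ofReal p)
    (hindPair : IndepFun (fun ω => (pr ω, E' ω))
      (fun ω (q : Fin n × Fin n) => E q.1 q.2 ω) μ)
    (hindPrE' : IndepFun pr E' μ)
    (t : ℝ) (ht : t ∈ Set.Icc (0 : ℝ) 1) :
    μ[fun ω => Vproc n E ω t - Vproc' n E pr E' ω t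
        | MeasurableSpace.comap (fun ω (q : Fin n × Fin n) => E q.1 q.2 ω) inferInstance]
      =ᵐ[μ] fun ω =>
        (2 / ((n : ℝ) * ((n : ℝ) - 1) / 2)) *
            (Vproc n E ω t - ∫ ω', Vproc n E ω' t ∂μ)
          - (2 * p / ((n : ℝ) * ((n : ℝ) - 1) / 2)) *
            (Tproc n E ω t - ∫ ω', Tproc n E ω' t ∂μ) :=
  stmt10_general μ n p hp E hEm hsym h01 hber hind pr hprm hpru E' hE'm hE'01 hE'p hindPair hindPrE'
    t ht
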